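/- arXiv:2511.22507 — 5 statements merged into one kernel-verified Lean document; each statement's English description precedes it below -/
import Mathlib

section
/- Let μ be a Borel probability measure on the unit circle ∂D = {z ∈ ℂ : |z| = 1}, and define m(z) = ∫_{∂D} (z − w)^{−1} dμ(w) for z ∈ ℂ ∖ supp μ. Then m(z) ≠ 0 for every z ∈ ℂ with |z| > 1, and m(z) ≠ 0 for every z ∈ ∂D ∖ supp μ. -/
open MeasureTheory Filter

noncomputable section

/-- The (closed) support of a Borel measure on `ℂ`: the set of points all of whose open
neighborhoods have positive measure. -/
def measSupport (μ : Measure ℂ) : Set ℂ :=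
  {z | ∀ U : Set ℂ, IsOpen U → z ∈ U → 0 < μ U}

/-- The `m`-function of `μ`: `m(z) = ∫ (z - w)⁻¹ dμ(w)`. -/
def mFun (μ : Measure ℂ) (z : ℂ) : ℂ := ∫ w, (z - w)⁻¹ ∂μ

/-! For `‖w‖ ≤ ‖z‖` and `w ≠ z` one has
`Re (z / (z - w)) = 1/2 + (‖z‖² - ‖w‖²) / (2 ‖z - w‖²) > 0`.
Hence `z * m(z) = ∫ z / (z - w) dμ(w)` has positive real part as soon as some ball around `z`
is `μ`-null (which makes the integrand bounded) and `μ` lives on `{w | ‖w‖ ≤ ‖z‖}`.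
For `‖z‖ > 1` the ball of radius `‖z‖ - 1` misses the circle; for `z` on the circle outside
the support such a ball exists by definition. -/

theorem Complex.re_div_sub_pos {z w : ℂ} (hwz : ‖w‖ ≤ ‖z‖) (hzw : z ≠ w) :
    0 < (z / (z - w)).re := by
  have hsub : 0 < Complex.normSq (z - w) := Complex.normSq_pos.2 (sub_ne_zero.2 hzw)
  have hnorm : w.re * w.re + w.im * w.im ≤ z.re * z.re + z.im * z.im := by
    rw [← Complex.normSq_apply, ← Complex.normSq_apply, ← Complex.sq_norm, ← Complex.sq_norm]
    exact pow_le_pow_left₀ (norm_nonneg w) hwz 2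
  rw [Complex.div_re, ← add_div]
  refine div_pos ?_ hsub
  rw [Complex.normSq_apply] at hsub
  simp only [Complex.sub_re, Complex.sub_im] at hsub ⊢
  nlinarith

theorem MeasureTheory.integral_pos_of_ae_pos {α : Type*} [MeasurableSpace α] {μ : Measure α}
    [NeZero μ] {f : α → ℝ} (hfi : Integrable f μ) (hf : ∀ᵐ x ∂μ, 0 < f x) :
    0 < ∫ x, f x ∂μ := by
  refine (integral_pos_iff_support_of_nonneg_ae (hf.mono fun _ h ↦ h.le) hfi).2 ?_
  refine pos_iff_ne_zero.2 fun h ↦ ?_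
  obtain ⟨x, hx0, hxpos⟩ := ((measure_eq_zero_iff_ae_notMem.1 h).and hf).exists
  exact hx0 hxpos.ne'

theorem mFun_ne_zero_of_measure_ball_eq_zero (μ : Measure ℂ) [IsFiniteMeasure μ] [NeZero μ]
    {z : ℂ} {r : ℝ} (hr : 0 < r) (hball : μ (Metric.ball z r) = 0) (hnorm : ∀ᵐ w ∂μ, ‖w‖ ≤ ‖z‖) :
    mFun μ z ≠ 0 := by
  have hfar : ∀ᵐ w ∂μ, r ≤ ‖z - w‖ := (measure_eq_zero_iff_ae_notMem.1 hball).mono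
    fun w hw ↦ by simpa [dist_eq_norm, norm_sub_rev] using hw
  have hint : Integrable (fun w ↦ z / (z - w)) μ := by
    have hmeas : Measurable fun w ↦ z / (z - w) := by fun_prop
    refine .of_bound hmeas.aestronglyMeasurable (‖z‖ * r⁻¹) (hfar.mono fun w hw ↦ ?_)
    rw [norm_div, div_eq_mul_inv]
    gcongr
  have hpos : 0 < ∫ w, (z / (z - w)).re ∂μ := by
    refine integral_pos_of_ae_pos hint.re ((hfar.and hnorm).mono fun w ⟨hw, hwz⟩ ↦ ?_)
    exact Complex.re_div_sub_pos hwz (sub_ne_zero.1 (norm_pos_iff.1 (hr.trans_le hw)))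
  have hre : ∫ w, (z / (z - w)).re ∂μ = (z * mFun μ z).re := by
    simp_rw [mFun, ← integral_const_mul, ← div_eq_mul_inv]
    exact integral_re hint
  intro h
  simp [hre, h] at hpos

/-- If `μ` is a Borel probability measure on the unit circle, then its `m`-function
does not vanish outside the closed unit disk, nor at points of the unit circle lying
outside the support of `μ`. -/
theorem stmt0 (μ : Measure ℂ) [IsProbabilityMeasure μ]
    (hcirc : μ (Metric.sphere (0 : ℂ) 1)ᶜ = 0) :
    (∀ z : ℂ, 1 < ‖z‖ → mFun μ z ≠ 0) ∧
    (∀ z : ℂ, ‖z‖ = 1 → z ∉ measSupport μ → mFun μ z ≠ 0) := by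
  have hsphere : ∀ᵐ w ∂μ, ‖w‖ = 1 :=
    (measure_eq_zero_iff_ae_notMem.1 hcirc).mono fun w hw ↦ by simpa using hw
  refine ⟨fun z hz ↦ ?_, fun z hz hzs ↦ ?_⟩
  · refine mFun_ne_zero_of_measure_ball_eq_zero μ (sub_pos.2 hz) (measure_mono_null ?_ hcirc)
      (hsphere.mono fun w hw ↦ hw ▸ hz.le)
    intro w hw hw1
    rw [Metric.mem_ball, dist_eq_norm] at hw
    rw [mem_sphere_zero_iff_norm] at hw1
    linarith [norm_sub_norm_le z w, norm_sub_rev z w]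
  · simp only [measSupport, Set.mem_ofPred_eq, not_forall, not_lt, nonpos_iff_eq_zero] at hzs
    obtain ⟨U, hU, hzU, hU0⟩ := hzs
    obtain ⟨r, hr, hball⟩ := Metric.isOpen_iff.1 hU z hzU
    exact mFun_ne_zero_of_measure_ball_eq_zero μ hr (measure_mono_null hball hU0)
      (hsphere.mono fun w hw ↦ (hw.trans hz.symm).le)

end
end

section
/- Let {α_k} ⊂ D be Verblunsky coefficients, β ∈ ∂D, and n ≥ 1. (1) If 1 < r ≤ R, then for all z with r ≤ |z| ≤ R one has Φ_n^{(β)}(z) ≠ 0 and (r−1)²/(R+1) < |Φ_{n+1}^{(β)}(z)/Φ_n^{(β)}(z)| < (R+1)²/(r−1). (2) If 0 < r ≤ R < 1, then for all z with r ≤ |z| ≤ R one has Φ_n^{(β)}(z) ≠ 0 and r²(1−R)²/(R²(1+r)) < |Φ_{n+1}^{(β)}(z)/Φ_n^{(β)}(z)| < R²(1+r)²/(r²(1−R)). -/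
/-!
Write `P = Φ_{n-1}(z)` and `Q = Φ*_{n-1}(z)`. The identity
`|Φ_{m+1}|² - |Φ*_{m+1}|² = (1 - |α_m|²) (|z|² |Φ_m|² - |Φ*_m|²)` shows by induction that
`|Q| ≤ |P|` and `P ≠ 0` for `|z| ≥ 1`, and `|P| ≤ |Q|`, `Q ≠ 0` for `|z| ≤ 1`.
Each of `Φ_n^{(β)}`, `Φ_n`, `Φ_{n+1}^{(β)}` has the form `x F - y G` with `|G| ≤ |F|`, so its
quotient by `F` has modulus in `[|x| - |y|, |x| + |y|]`. For `|z| > 1` factor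
`Φ_{n+1}^{(β)} / Φ_n^{(β)} = (Φ_{n+1}^{(β)} / Φ_n) (Φ_n / P) / (Φ_n^{(β)} / P)`: every factor
lies in `[|z| - 1, |z| + 1]`, the middle one strictly inside since `|α_{n-1}| < 1`. For `|z| < 1`
the same works with `Φ*_n, Q` in place of `Φ_n, P` and the interval `[1 - |z|, 1 + |z|]`.
-/

open Polynomial Filter

noncomputable section

/-- Monic OPUC via the Szegő recursion, with reversed polynomial
`Φ*_n = z^n conj(Φ_n(1/conj z))` realized as `reflect n` of the conjugated polynomial. -/
def szPhi (α : ℕ → ℂ) : ℕ → Polynomial ℂ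
  | 0 => 1
  | n + 1 =>
      X * szPhi α n -
        C ((starRingEnd ℂ) (α n)) * Polynomial.reflect n ((szPhi α n).map (starRingEnd ℂ))

/-- The reversed polynomial `Φ*_n(z) = z^n conj(Φ_n(1/conj z))`. -/
def szPhiStar (α : ℕ → ℂ) (n : ℕ) : Polynomial ℂ :=
  Polynomial.reflect n ((szPhi α n).map (starRingEnd ℂ))

/-- Paraorthogonal polynomial `Φ_n^{(β)}(z) = zΦ_{n-1}(z) - conj(β) Φ*_{n-1}(z)`. -/
def popuc (α : ℕ → ℂ) (β : ℂ) (n : ℕ) : Polynomial ℂ :=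
  X * szPhi α (n - 1) - C ((starRingEnd ℂ) β) * szPhiStar α (n - 1)

open Set

namespace Polynomial

variable {R : Type*} [Semiring R] {p : R[X]} {m : ℕ}

lemma reflect_succ_X_mul (hp : p.natDegree ≤ m) : reflect (m + 1) (X * p) = reflect m p := by
  rw [add_comm, reflect_mul X p natDegree_X_le hp, reflect_one_X, one_mul]

lemma reflect_succ_reflect (hp : p.natDegree ≤ m) : reflect (m + 1) (reflect m p) = X * p := by
  rw [← reflect_succ_X_mul hp, reflect_reflect]

end Polynomial

section NormBounds

variable {𝕜 : Type*} [NormedField 𝕜] {x y F G : 𝕜}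

lemma norm_mul_sub_mul_div_mem_Icc (hF : F ≠ 0) (hGF : ‖G‖ ≤ ‖F‖) :
    ‖(x * F - y * G) / F‖ ∈ Icc (‖x‖ - ‖y‖) (‖x‖ + ‖y‖) := by
  have hyw : ‖y * (G / F)‖ ≤ ‖y‖ := by
    rw [norm_mul, norm_div]
    exact mul_le_of_le_one_right (norm_nonneg y) (div_le_one_of_le₀ hGF (norm_nonneg F))
  rw [show (x * F - y * G) / F = x - y * (G / F) by field_simp]
  exact ⟨(sub_le_sub_left hyw _).trans (norm_sub_norm_le _ _),
    (norm_sub_le _ _).trans (add_le_add le_rfl hyw)⟩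

lemma norm_mul_sub_mul_div_mem_Icc' (hG : G ≠ 0) (hFG : ‖F‖ ≤ ‖G‖) :
    ‖(x * F - y * G) / G‖ ∈ Icc (‖y‖ - ‖x‖) (‖y‖ + ‖x‖) := by
  rw [← norm_neg ((x * F - y * G) / G), ← neg_div, neg_sub]
  exact norm_mul_sub_mul_div_mem_Icc hG hFG

lemma ne_zero_of_pos_le_norm_div {a b : 𝕜} {l : ℝ} (hl : 0 < l) (h : l ≤ ‖a / b‖) : a ≠ 0 :=
  (div_ne_zero_iff.mp (norm_pos_iff.mp (hl.trans_le h))).1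

lemma norm_div_mem_Ioo_of_factors {a b c d : 𝕜} {l u : ℝ} (hl : 0 < l) (hc : c ≠ 0)
    (hd : d ≠ 0) (hac : ‖a / c‖ ∈ Icc l u) (hcd : ‖c / d‖ ∈ Ioo l u) (hbd : ‖b / d‖ ∈ Icc l u) :
    b ≠ 0 ∧ ‖a / b‖ ∈ Ioo (l ^ 2 / u) (u ^ 2 / l) := by
  have hb : b ≠ 0 := ne_zero_of_pos_le_norm_div hl hbd.1
  refine ⟨hb, ?_⟩
  rw [show a / b = a / c * (c / d) / (b / d) by field_simp, norm_div, norm_mul]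
  obtain ⟨hx₁, hx₂⟩ := hac
  obtain ⟨hy₁, hy₂⟩ := hcd
  obtain ⟨hw₁, hw₂⟩ := hbd
  have hu : 0 < u := (hl.trans hy₁).trans hy₂
  have hw : 0 < ‖b / d‖ := hl.trans_le hw₁
  have hlo : l * l < ‖a / c‖ * ‖c / d‖ := mul_lt_mul' hx₁ hy₁ hl.le (hl.trans_le hx₁)
  have hhi : ‖a / c‖ * ‖c / d‖ < u * u := mul_lt_mul' hx₂ hy₂ (hl.trans hy₁).le hu
  constructor
  · rw [div_lt_div_iff₀ hu hw]
    nlinarith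
  · rw [div_lt_div_iff₀ hw hl]
    nlinarith

end NormBounds

lemma natDegree_szPhi_le (α : ℕ → ℂ) (m : ℕ) : (szPhi α m).natDegree ≤ m := by
  induction m with
  | zero => simp [szPhi]
  | succ m ih =>
    rw [szPhi]
    refine (natDegree_sub_le _ _).trans (max_le ?_ ?_)
    · exact natDegree_mul_le.trans (by have := natDegree_X_le (R := ℂ); omega)
    · refine natDegree_C_mul_le _ _ |>.trans (natDegree_reflect_le.trans ?_)
      exact max_le (by omega) (natDegree_map_le.trans (ih.trans (by omega)))

lemma szPhiStar_succ (α : ℕ → ℂ) (m : ℕ) :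
    szPhiStar α (m + 1) = szPhiStar α m - C (α m) * (X * szPhi α m) := by
  have hconj : ((szPhi α m).map (starRingEnd ℂ)).natDegree ≤ m :=
    natDegree_map_le.trans (natDegree_szPhi_le α m)
  have hinv : ((szPhi α m).map (starRingEnd ℂ)).map (starRingEnd ℂ) = szPhi α m := by
    ext; simp
  rw [szPhiStar, szPhi, Polynomial.map_sub, Polynomial.map_mul, Polynomial.map_mul,
    Polynomial.map_X, map_C, reflect_sub, reflect_succ_X_mul hconj, ← reflect_map,
    hinv, reflect_C_mul, reflect_succ_reflect (natDegree_szPhi_le α m)]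
  simp [szPhiStar]

section Szego

variable {α : ℕ → ℂ} {β z : ℂ}

lemma eval_szPhi_succ (m : ℕ) :
    (szPhi α (m + 1)).eval z =
      z * (szPhi α m).eval z - (starRingEnd ℂ) (α m) * (szPhiStar α m).eval z := by
  simp [szPhi, szPhiStar]

lemma eval_szPhiStar_succ (m : ℕ) :
    (szPhiStar α (m + 1)).eval z =
      (szPhiStar α m).eval z - α m * z * (szPhi α m).eval z := by
  simp [szPhiStar_succ, mul_assoc]

lemma eval_popuc_succ (m : ℕ) :
    (popuc α β (m + 1)).eval z =
      z * (szPhi α m).eval z - (starRingEnd ℂ) β * (szPhiStar α m).eval z := by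
  simp [popuc]

lemma norm_sq_eval_szPhi_succ_sub (m : ℕ) :
    ‖(szPhi α (m + 1)).eval z‖ ^ 2 - ‖(szPhiStar α (m + 1)).eval z‖ ^ 2 =
      (1 - ‖α m‖ ^ 2) * (‖z‖ ^ 2 * ‖(szPhi α m).eval z‖ ^ 2 - ‖(szPhiStar α m).eval z‖ ^ 2) := by
  rw [eval_szPhi_succ, eval_szPhiStar_succ]
  simp only [Complex.sq_norm, Complex.normSq_apply, Complex.sub_re, Complex.sub_im,
    Complex.mul_re, Complex.mul_im, Complex.conj_re, Complex.conj_im]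
  ring

lemma norm_eval_szPhi_succ_div_mem_Icc {m : ℕ} (hP : (szPhi α m).eval z ≠ 0)
    (hQP : ‖(szPhiStar α m).eval z‖ ≤ ‖(szPhi α m).eval z‖) :
    ‖(szPhi α (m + 1)).eval z / (szPhi α m).eval z‖ ∈ Icc (‖z‖ - ‖α m‖) (‖z‖ + ‖α m‖) := by
  rw [eval_szPhi_succ, ← Complex.norm_conj (α m)]
  exact norm_mul_sub_mul_div_mem_Icc hP hQP

lemma norm_eval_szPhiStar_succ_div_mem_Icc {m : ℕ} (hQ : (szPhiStar α m).eval z ≠ 0)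
    (hPQ : ‖(szPhi α m).eval z‖ ≤ ‖(szPhiStar α m).eval z‖) :
    ‖(szPhiStar α (m + 1)).eval z / (szPhiStar α m).eval z‖ ∈
      Icc (1 - ‖α m‖ * ‖z‖) (1 + ‖α m‖ * ‖z‖) := by
  have h := norm_mul_sub_mul_div_mem_Icc (x := 1) (y := α m * z) hQ hPQ
  rwa [one_mul, ← eval_szPhiStar_succ, norm_one, norm_mul] at h

lemma norm_eval_popuc_succ_div_szPhi_mem_Icc (hβ : ‖β‖ = 1) {m : ℕ}
    (hP : (szPhi α m).eval z ≠ 0) (hQP : ‖(szPhiStar α m).eval z‖ ≤ ‖(szPhi α m).eval z‖) :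
    ‖(popuc α β (m + 1)).eval z / (szPhi α m).eval z‖ ∈ Icc (‖z‖ - 1) (‖z‖ + 1) := by
  rw [eval_popuc_succ, ← hβ, ← Complex.norm_conj β]
  exact norm_mul_sub_mul_div_mem_Icc hP hQP

lemma norm_eval_popuc_succ_div_szPhiStar_mem_Icc (hβ : ‖β‖ = 1) {m : ℕ}
    (hQ : (szPhiStar α m).eval z ≠ 0) (hPQ : ‖(szPhi α m).eval z‖ ≤ ‖(szPhiStar α m).eval z‖) :
    ‖(popuc α β (m + 1)).eval z / (szPhiStar α m).eval z‖ ∈ Icc (1 - ‖z‖) (1 + ‖z‖) := by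
  rw [eval_popuc_succ, ← hβ, ← Complex.norm_conj β]
  exact norm_mul_sub_mul_div_mem_Icc' hQ hPQ

theorem norm_eval_szPhiStar_le_and_eval_szPhi_ne_zero (hα : ∀ k, ‖α k‖ < 1)
    (hz : 1 ≤ ‖z‖) (m : ℕ) :
    ‖(szPhiStar α m).eval z‖ ≤ ‖(szPhi α m).eval z‖ ∧ (szPhi α m).eval z ≠ 0 := by
  induction m with
  | zero => simp [szPhi, szPhiStar]
  | succ m ih =>
    obtain ⟨hQP, hP⟩ := ih
    have hzQP : ‖(szPhiStar α m).eval z‖ ^ 2 ≤ ‖z‖ ^ 2 * ‖(szPhi α m).eval z‖ ^ 2 := by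
      rw [← mul_pow]
      exact pow_le_pow_left₀ (norm_nonneg _)
        (hQP.trans (le_mul_of_one_le_left (norm_nonneg _) hz)) 2
    refine ⟨(pow_le_pow_iff_left₀ (norm_nonneg _) (norm_nonneg _) two_ne_zero).mp ?_, ?_⟩
    · rw [← sub_nonneg, norm_sq_eval_szPhi_succ_sub]
      exact mul_nonneg (sub_nonneg.2 (pow_le_one₀ (norm_nonneg _) (hα m).le))
        (sub_nonneg.2 hzQP)
    · exact ne_zero_of_pos_le_norm_div (by linarith [hα m])
        (norm_eval_szPhi_succ_div_mem_Icc hP hQP).1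

theorem norm_eval_szPhi_le_and_eval_szPhiStar_ne_zero (hα : ∀ k, ‖α k‖ < 1)
    (hz : ‖z‖ ≤ 1) (m : ℕ) :
    ‖(szPhi α m).eval z‖ ≤ ‖(szPhiStar α m).eval z‖ ∧ (szPhiStar α m).eval z ≠ 0 := by
  induction m with
  | zero => simp [szPhi, szPhiStar]
  | succ m ih =>
    obtain ⟨hPQ, hQ⟩ := ih
    have hzPQ : ‖z‖ ^ 2 * ‖(szPhi α m).eval z‖ ^ 2 ≤ ‖(szPhiStar α m).eval z‖ ^ 2 := by
      rw [← mul_pow]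
      exact pow_le_pow_left₀ (by positivity)
        ((mul_le_of_le_one_left (norm_nonneg _) hz).trans hPQ) 2
    refine ⟨(pow_le_pow_iff_left₀ (norm_nonneg _) (norm_nonneg _) two_ne_zero).mp ?_, ?_⟩
    · rw [← sub_nonpos, norm_sq_eval_szPhi_succ_sub]
      exact mul_nonpos_of_nonneg_of_nonpos (sub_nonneg.2 (pow_le_one₀ (norm_nonneg _) (hα m).le))
        (sub_nonpos.2 hzPQ)
    · have hαz : ‖α m‖ * ‖z‖ < 1 :=
        mul_lt_one_of_nonneg_of_lt_one_left (norm_nonneg _) (hα m) hz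
      exact ne_zero_of_pos_le_norm_div (by linarith)
        (norm_eval_szPhiStar_succ_div_mem_Icc hQ hPQ).1

theorem norm_eval_popuc_succ_div_mem_Ioo_of_one_lt_norm (hα : ∀ k, ‖α k‖ < 1)
    (hβ : ‖β‖ = 1) (m : ℕ) (hz : 1 < ‖z‖) :
    (popuc α β (m + 1)).eval z ≠ 0 ∧
      ‖(popuc α β (m + 1 + 1)).eval z / (popuc α β (m + 1)).eval z‖ ∈
        Ioo ((‖z‖ - 1) ^ 2 / (‖z‖ + 1)) ((‖z‖ + 1) ^ 2 / (‖z‖ - 1)) := by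
  obtain ⟨hQP, hP⟩ := norm_eval_szPhiStar_le_and_eval_szPhi_ne_zero hα hz.le m
  obtain ⟨hQP', hP'⟩ := norm_eval_szPhiStar_le_and_eval_szPhi_ne_zero hα hz.le (m + 1)
  have hratio := norm_eval_szPhi_succ_div_mem_Icc hP hQP
  refine norm_div_mem_Ioo_of_factors (by linarith) hP' hP
    (norm_eval_popuc_succ_div_szPhi_mem_Icc hβ hP' hQP') ?_
    (norm_eval_popuc_succ_div_szPhi_mem_Icc hβ hP hQP)
  exact ⟨by linarith [hratio.1, hα m], by linarith [hratio.2, hα m]⟩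

theorem norm_eval_popuc_succ_div_mem_Ioo_of_norm_lt_one (hα : ∀ k, ‖α k‖ < 1)
    (hβ : ‖β‖ = 1) (m : ℕ) (hz₀ : 0 < ‖z‖) (hz : ‖z‖ < 1) :
    (popuc α β (m + 1)).eval z ≠ 0 ∧
      ‖(popuc α β (m + 1 + 1)).eval z / (popuc α β (m + 1)).eval z‖ ∈
        Ioo ((1 - ‖z‖) ^ 2 / (1 + ‖z‖)) ((1 + ‖z‖) ^ 2 / (1 - ‖z‖)) := by
  obtain ⟨hPQ, hQ⟩ := norm_eval_szPhi_le_and_eval_szPhiStar_ne_zero hα hz.le m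
  obtain ⟨hPQ', hQ'⟩ := norm_eval_szPhi_le_and_eval_szPhiStar_ne_zero hα hz.le (m + 1)
  have hratio := norm_eval_szPhiStar_succ_div_mem_Icc hQ hPQ
  have hαz : ‖α m‖ * ‖z‖ < ‖z‖ := mul_lt_of_lt_one_left hz₀ (hα m)
  refine norm_div_mem_Ioo_of_factors (by linarith) hQ' hQ
    (norm_eval_popuc_succ_div_szPhiStar_mem_Icc hβ hQ' hPQ') ?_
    (norm_eval_popuc_succ_div_szPhiStar_mem_Icc hβ hQ hPQ)
  exact ⟨by linarith [hratio.1], by linarith [hratio.2]⟩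

end Szego

/-- Bounds on the ratio of two consecutive paraorthogonal polynomials in annuli
outside and inside the unit circle. -/
theorem stmt3 (α : ℕ → ℂ) (hα : ∀ k, ‖α k‖ < 1)
    (β : ℂ) (hβ : ‖β‖ = 1) (n : ℕ) (hn : 1 ≤ n) :
    (∀ r R : ℝ, 1 < r → r ≤ R → ∀ z : ℂ, r ≤ ‖z‖ → ‖z‖ ≤ R →
      (popuc α β n).eval z ≠ 0 ∧
      (r - 1) ^ 2 / (R + 1) <
        ‖(popuc α β (n + 1)).eval z / (popuc α β n).eval z‖ ∧
      ‖(popuc α β (n + 1)).eval z / (popuc α β n).eval z‖ <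
        (R + 1) ^ 2 / (r - 1)) ∧
    (∀ r R : ℝ, 0 < r → r ≤ R → R < 1 → ∀ z : ℂ, r ≤ ‖z‖ → ‖z‖ ≤ R →
      (popuc α β n).eval z ≠ 0 ∧
      r ^ 2 * (1 - R) ^ 2 / (R ^ 2 * (1 + r)) <
        ‖(popuc α β (n + 1)).eval z / (popuc α β n).eval z‖ ∧
      ‖(popuc α β (n + 1)).eval z / (popuc α β n).eval z‖ <
        R ^ 2 * (1 + r) ^ 2 / (r ^ 2 * (1 - R))) := by
  obtain ⟨m, rfl⟩ : ∃ m, n = m + 1 := ⟨n - 1, by omega⟩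
  constructor
  · intro r R hr hrR z hzr hzR
    obtain ⟨hne, hlo, hhi⟩ :=
      norm_eval_popuc_succ_div_mem_Ioo_of_one_lt_norm hα hβ m (hr.trans_le hzr)
    refine ⟨hne, lt_of_le_of_lt ?_ hlo, hhi.trans_le ?_⟩ <;> gcongr
  · intro r R hr hrR hR z hzr hzR
    obtain ⟨hne, hlo, hhi⟩ := norm_eval_popuc_succ_div_mem_Ioo_of_norm_lt_one hα hβ m
      (hr.trans_le hzr) (hzR.trans_lt hR)
    have hR₀ : 0 < R := hr.trans_le hrR
    refine ⟨hne, lt_of_le_of_lt ?_ hlo, hhi.trans_le ?_⟩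
    · have hsq : r ^ 2 * (1 + R) ≤ R ^ 2 * (1 + r) := by
        nlinarith [mul_le_mul hrR hrR hr.le hR₀.le,
          mul_nonneg (mul_nonneg hr.le hR₀.le) (sub_nonneg.2 hrR)]
      calc r ^ 2 * (1 - R) ^ 2 / (R ^ 2 * (1 + r)) ≤ (1 - R) ^ 2 / (1 + R) := by
            rw [div_le_div_iff₀ (by positivity) (by positivity)]
            nlinarith [mul_le_mul_of_nonneg_left hsq (sq_nonneg (1 - R))]
        _ ≤ (1 - ‖z‖) ^ 2 / (1 + ‖z‖) := by gcongr
    · calc (1 + ‖z‖) ^ 2 / (1 - ‖z‖) ≤ (1 + R) ^ 2 / (1 - R) := by gcongr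
        _ = (r * (1 + R)) ^ 2 / (r ^ 2 * (1 - R)) := by field_simp
        _ ≤ (R * (1 + r)) ^ 2 / (r ^ 2 * (1 - R)) := by gcongr ?_ ^ 2 / _; linarith
        _ = R ^ 2 * (1 + r) ^ 2 / (r ^ 2 * (1 - R)) := by ring

end
end

section
/- Let ℓ ∈ ℕ, t > 0, and let γ_{−1}, γ_0, γ_1 : [0,t] → ℓ×ℓ complex matrices be measurable. Let {a^{(N)}_{j,k} : j,k ∈ ℤ, |j−k| ≤ 1, N ∈ ℕ₀} be ℓ×ℓ complex matrices with norms bounded by a uniform constant, such that for each i ∈ {−1,0,1}, lim_{n/N→s} a^{(N)}_{n+i,n} = γ_i(s) for almost every s ∈ [0,t]. Assume that for almost every s ∈ [0,t] there is a compactly supported finite positive Borel measure ν^{(s)} on ℂ such that for every k ∈ ℕ₀, (1/n)·Tr((J_n(γ_{−1}(s), γ_0(s), γ_1(s)))^k) → ∫_ℂ z^k dν^{(s)}(z) as n → ∞. Then for every k ∈ ℕ₀ and all sequences n_j, N_j → ∞ with n_j/N_j → t, (1/n_j)·Tr((J_{n_j}^{(N_j)})^k) → (1/t) ∫_0^t (∫_ℂ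 z^k dν^{(s)}(z)) ds. -/
/-!
The `(p, p)` block of the `k`-th power of a tridiagonal block operator only involves the blocks
within distance `k` of `p`. Hence `Tr (J_n^{(N)})^k` equals, up to `O(k)` boundary terms, the sum
over `p < n` of the local traces `Tr ((a^{(N)})^k)_{p,p}` of the two-sided operator. For the
Toeplitz operator `T(s)` these local traces do not depend on `p`, so the hypothesis on `ν^{(s)}`
identifies `Tr (T(s)^k)_{0,0}` with `∫ z^k dν^{(s)}`. Near `p = ⌊sN⌋` the blocks of `a^{(N)}`
converge to those of `T(s)`, so the local trace there tends to `Tr (T(s)^k)_{0,0}`. Finally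
`(1/n) ∑_{p<n}` is `(N/n) ∫_0^{n/N}` of the step function `s ↦ (local trace at ⌊sN⌋)`, and
dominated convergence gives the limit `(1/t) ∫_0^t`.
-/

open Filter MeasureTheory

noncomputable section

/-- The `nℓ × nℓ` truncation of the two-sided block-tridiagonal operator with block
entries `a j k` (`|j - k| ≤ 1`, zero otherwise). -/
def Jn (ℓ n : ℕ) (a : ℤ → ℤ → Matrix (Fin ℓ) (Fin ℓ) ℂ) :
    Matrix (Fin n × Fin ℓ) (Fin n × Fin ℓ) ℂ :=
  Matrix.of fun pq rs =>
    if |((pq.1 : ℕ) : ℤ) - ((rs.1 : ℕ) : ℤ)| ≤ 1 then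
      a ((pq.1 : ℕ) : ℤ) ((rs.1 : ℕ) : ℤ) pq.2 rs.2
    else 0

/-- The block entries of the block Toeplitz tridiagonal matrix with blocks
`a_{j-1,j} = γ₋₁`, `a_{j,j} = γ₀`, `a_{j+1,j} = γ₁`. -/
def toeplitzBlocks (ℓ : ℕ) (γm γ0 γ1 : Matrix (Fin ℓ) (Fin ℓ) ℂ) :
    ℤ → ℤ → Matrix (Fin ℓ) (Fin ℓ) ℂ :=
  fun j k => if j + 1 = k then γm else if j = k then γ0 else if j = k + 1 then γ1 else 0

section TridiagPow

variable {A : Type*} [Semiring A]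

/-- The `(p, q)` block of the `m`-th power of the two-sided tridiagonal block operator with
block entries `e i j`, `|i - j| ≤ 1`. -/
def tridiagPow (e : ℤ → ℤ → A) : ℕ → ℤ → ℤ → A
  | 0, p, q => if p = q then 1 else 0
  | m + 1, p, q => ∑ j ∈ Finset.Icc (p - 1) (p + 1), e p j * tridiagPow e m j q

theorem tridiagPow_shift (e : ℤ → ℤ → A) (r : ℤ) (m : ℕ) (p q : ℤ) :
    tridiagPow (fun i j => e (i + r) (j + r)) m p q = tridiagPow e m (p + r) (q + r) := by
  induction m generalizing p with
  | zero => simp [tridiagPow]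
  | succ m ih =>
    rw [tridiagPow, tridiagPow, show p + r - 1 = p - 1 + r by ring,
      show p + r + 1 = p + 1 + r by ring, ← Finset.map_add_right_Icc, Finset.sum_map]
    simp [ih]

theorem tridiagPow_congr {e e' : ℤ → ℤ → A} {m : ℕ} {p : ℤ}
    (h : ∀ i j, |i - p| < m → |i - j| ≤ 1 → e i j = e' i j) (q : ℤ) :
    tridiagPow e m p q = tridiagPow e' m p q := by
  induction m generalizing p with
  | zero => rfl
  | succ m ih =>
    refine Finset.sum_congr rfl fun j hj => ?_
    rw [Finset.mem_Icc] at hj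
    rw [h p j (by simp) (abs_le.2 ⟨by omega, by omega⟩), ih fun i j' hi hij => h i j' ?_ hij]
    rw [abs_lt] at hi ⊢
    push_cast
    omega

theorem tendsto_tridiagPow [TopologicalSpace A] [ContinuousAdd A] [ContinuousMul A]
    {α : Type*} {l : Filter α} {E : α → ℤ → ℤ → A} {e : ℤ → ℤ → A} {m : ℕ} {p : ℤ}
    (h : ∀ i j, |i - p| < m → |i - j| ≤ 1 → Tendsto (fun k => E k i j) l (nhds (e i j)))
    (q : ℤ) : Tendsto (fun k => tridiagPow (E k) m p q) l (nhds (tridiagPow e m p q)) := by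
  induction m generalizing p with
  | zero => exact tendsto_const_nhds
  | succ m ih =>
    refine tendsto_finsetSum _ fun j hj => ?_
    rw [Finset.mem_Icc] at hj
    refine (h p j (by simp) (abs_le.2 ⟨by omega, by omega⟩)).mul
      (ih fun i j' hi hij => h i j' ?_ hij)
    rw [abs_lt] at hi ⊢
    push_cast
    omega

end TridiagPow

theorem norm_tridiagPow_apply_le {ι R : Type*} [Fintype ι] [DecidableEq ι] [NormedRing R]
    [NormOneClass R] {e : ℤ → ℤ → Matrix ι ι R} {C : ℝ} (hC : 0 ≤ C)
    (he : ∀ p q x y, ‖e p q x y‖ ≤ C) (m : ℕ) (p q : ℤ) (x y : ι) :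
    ‖tridiagPow e m p q x y‖ ≤ (3 * Fintype.card ι * C) ^ m := by
  induction m generalizing p x with
  | zero =>
    by_cases hpq : p = q <;> by_cases hxy : x = y <;> simp [tridiagPow, hpq, hxy, Matrix.one_apply]
  | succ m ih =>
    rw [tridiagPow, Matrix.sum_apply]
    calc ‖∑ j ∈ Finset.Icc (p - 1) (p + 1), (e p j * tridiagPow e m j q) x y‖
        ≤ ∑ j ∈ Finset.Icc (p - 1) (p + 1), ∑ z : ι, ‖e p j x z * tridiagPow e m j q z y‖ := by
          refine (norm_sum_le _ _).trans (Finset.sum_le_sum fun j _ => ?_)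
          exact norm_sum_le _ _
      _ ≤ ∑ j ∈ Finset.Icc (p - 1) (p + 1), ∑ z : ι, C * (3 * Fintype.card ι * C) ^ m := by
          gcongr with j _ z
          exact (norm_mul_le _ _).trans (mul_le_mul (he _ _ _ _) (ih _ _) (norm_nonneg _) hC)
      _ = (3 * Fintype.card ι * C) ^ (m + 1) := by
          simp [Int.card_Icc, show p + 1 + 1 - (p - 1) = 3 by ring]
          ring

theorem norm_trace_tridiagPow_le {ι R : Type*} [Fintype ι] [DecidableEq ι] [NormedRing R]
    [NormOneClass R] {e : ℤ → ℤ → Matrix ι ι R} {C : ℝ} (hC : 0 ≤ C)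
    (he : ∀ p q x y, ‖e p q x y‖ ≤ C) (m : ℕ) (p q : ℤ) :
    ‖(tridiagPow e m p q).trace‖ ≤ Fintype.card ι * (3 * Fintype.card ι * C) ^ m := by
  calc ‖(tridiagPow e m p q).trace‖ ≤ ∑ x : ι, ‖tridiagPow e m p q x x‖ := norm_sum_le _ _
    _ ≤ ∑ _x : ι, (3 * Fintype.card ι * C) ^ m :=
        Finset.sum_le_sum fun x _ => norm_tridiagPow_apply_le hC he m p q x x
    _ = Fintype.card ι * (3 * Fintype.card ι * C) ^ m := by simp

def truncateBlocks {A : Type*} [Zero A] (n : ℕ) (b : ℤ → ℤ → A) : ℤ → ℤ → A :=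
  fun i j => if 0 ≤ i ∧ i < n ∧ 0 ≤ j ∧ j < n ∧ |i - j| ≤ 1 then b i j else 0

theorem tridiagPow_truncateBlocks_of_le {A : Type*} [Semiring A] {b : ℤ → ℤ → A} {n k p : ℕ}
    (hkp : k ≤ p) (hpn : p + k < n) :
    tridiagPow (truncateBlocks n b) k p p = tridiagPow b k p p :=
  tridiagPow_congr (fun i j hi hij => by
    rw [abs_lt] at hi
    rw [abs_le] at hij
    rw [truncateBlocks, if_pos ⟨by omega, by omega, by omega, by omega, abs_le.2 hij⟩]) _

section Truncation

variable {ℓ : ℕ}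

theorem Jn_apply (n : ℕ) (b : ℤ → ℤ → Matrix (Fin ℓ) (Fin ℓ) ℂ) (p r : Fin n) (x z : Fin ℓ) :
    Jn ℓ n b (p, x) (r, z) = truncateBlocks n b p r x z := by
  simp only [Jn, truncateBlocks, Matrix.of_apply]
  split_ifs <;> simp_all

theorem sum_fin_eq_sum_Icc_of_support_subset {M : Type*} [AddCommMonoid M] {n : ℕ} {p : ℤ}
    {H : ℤ → M} (hH : ∀ j, H j ≠ 0 → 0 ≤ j ∧ j < n ∧ |p - j| ≤ 1) :
    ∑ r : Fin n, H r = ∑ j ∈ Finset.Icc (p - 1) (p + 1), H j := by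
  have hinj : Function.Injective fun r : Fin n => ((r : ℕ) : ℤ) := fun r s hrs => by
    simpa [Fin.val_inj] using hrs
  rw [← finsum_eq_sum_of_fintype, ← finsum_mem_range hinj, ← finsum_mem_coe_finset]
  refine finsum_mem_inter_support_eq H _ _ (Set.ext fun j => ?_)
  simp only [Set.mem_inter_iff, Set.mem_range, Finset.coe_Icc, Set.mem_Icc,
    Function.mem_support, and_congr_left_iff]
  intro hj
  obtain ⟨hj0, hjn, hpj⟩ := hH j hj
  rw [abs_le] at hpj
  exact iff_of_true ⟨⟨j.toNat, by omega⟩, by simp [hj0]⟩ ⟨by omega, by omega⟩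

theorem Jn_pow_apply (n : ℕ) (b : ℤ → ℤ → Matrix (Fin ℓ) (Fin ℓ) ℂ) (m : ℕ) (p q : Fin n)
    (x y : Fin ℓ) :
    (Jn ℓ n b ^ m) (p, x) (q, y) = tridiagPow (truncateBlocks n b) m p q x y := by
  induction m generalizing p x with
  | zero =>
    by_cases hpq : p = q
    · subst hpq
      simp [tridiagPow, Matrix.one_apply]
    · simp [tridiagPow, hpq, Fin.val_inj]
  | succ m ih =>
    rw [pow_succ', Matrix.mul_apply, Fintype.sum_prod_type, tridiagPow, Matrix.sum_apply]
    simp only [Jn_apply, ih, ← Matrix.mul_apply]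
    refine sum_fin_eq_sum_Icc_of_support_subset
      (H := fun j => (truncateBlocks n b p j * tridiagPow (truncateBlocks n b) m j q) x y)
      fun j hj => by_contra fun hout => hj ?_
    rw [truncateBlocks, if_neg fun h => hout ⟨h.2.2.1, h.2.2.2.1, h.2.2.2.2⟩, zero_mul,
      Matrix.zero_apply]

theorem trace_Jn_pow (n : ℕ) (b : ℤ → ℤ → Matrix (Fin ℓ) (Fin ℓ) ℂ) (m : ℕ) :
    (Jn ℓ n b ^ m).trace = ∑ p ∈ Finset.range n, (tridiagPow (truncateBlocks n b) m p p).trace := by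
  rw [← Fin.sum_univ_eq_sum_range (fun p : ℕ => (tridiagPow (truncateBlocks n b) m p p).trace)]
  simp only [Matrix.trace, Matrix.diag, Fintype.sum_prod_type, Jn_pow_apply]

end Truncation

section Boundary

variable {ℓ : ℕ}

theorem norm_trace_Jn_pow_sub_sum_le {b : ℤ → ℤ → Matrix (Fin ℓ) (Fin ℓ) ℂ} {C : ℝ}
    (hC : 0 ≤ C) (hb : ∀ p q x y, ‖b p q x y‖ ≤ C) (n k : ℕ) :
    ‖(Jn ℓ n b ^ k).trace - ∑ p ∈ Finset.range n, (tridiagPow b k p p).trace‖ ≤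
      2 * k * (2 * (ℓ * (3 * ℓ * C) ^ k)) := by
  have hbT : ∀ p q x y, ‖truncateBlocks n b p q x y‖ ≤ C := fun p q x y => by
    unfold truncateBlocks
    split_ifs
    exacts [hb p q x y, by simpa using hC]
  have hterm : ∀ p : ℕ, ‖(tridiagPow (truncateBlocks n b) k p p).trace -
      (tridiagPow b k p p).trace‖ ≤ 2 * (ℓ * (3 * ℓ * C) ^ k) := fun p => by
    refine (norm_sub_le _ _).trans ?_
    have h₁ := norm_trace_tridiagPow_le hC hbT k p p
    have h₂ := norm_trace_tridiagPow_le hC hb k p p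
    simp only [Fintype.card_fin] at h₁ h₂
    linarith
  have hcard : ((Finset.range n).filter fun p => p < k ∨ n ≤ p + k).card ≤ 2 * k := by
    calc _ ≤ (Finset.range k ∪ Finset.Ico (n - k) n).card := by
          refine Finset.card_le_card fun p hp => ?_
          simp only [Finset.mem_filter, Finset.mem_range] at hp
          simp only [Finset.mem_union, Finset.mem_range, Finset.mem_Ico]
          omega
      _ ≤ k + (n - (n - k)) := by
          simpa using Finset.card_union_le (Finset.range k) (Finset.Ico (n - k) n)
      _ ≤ 2 * k := by omega
  rw [trace_Jn_pow, ← Finset.sum_sub_distrib, ← Finset.sum_filter_of_ne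
    (p := fun p => p < k ∨ n ≤ p + k) fun p _ hne => by_contra fun hgood => hne ?_]
  · calc _ ≤ ∑ _p ∈ (Finset.range n).filter (fun p => p < k ∨ n ≤ p + k),
            2 * (ℓ * (3 * ℓ * C) ^ k) := norm_sum_le_of_le _ fun p _ => hterm p
      _ ≤ 2 * k * (2 * (ℓ * (3 * ℓ * C) ^ k)) := by
          rw [Finset.sum_const, nsmul_eq_mul]
          gcongr
          exact_mod_cast hcard
  · rw [tridiagPow_truncateBlocks_of_le (by omega) (by omega), sub_self]

theorem tendsto_inv_mul_trace_Jn_pow_sub_sum {b : ℕ → ℤ → ℤ → Matrix (Fin ℓ) (Fin ℓ) ℂ}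
    {C : ℝ} (hC : 0 ≤ C) (hb : ∀ j p q x y, ‖b j p q x y‖ ≤ C) {n : ℕ → ℕ}
    (hn : Tendsto n atTop atTop) (k : ℕ) :
    Tendsto (fun j => (n j : ℂ)⁻¹ * ((Jn ℓ (n j) (b j) ^ k).trace -
      ∑ p ∈ Finset.range (n j), (tridiagPow (b j) k p p).trace)) atTop (nhds 0) := by
  have hinv : Tendsto (fun j => (n j : ℝ)⁻¹ * (2 * k * (2 * (ℓ * (3 * ℓ * C) ^ k))))
      atTop (nhds 0) := by
    simpa using (tendsto_inv_atTop_zero.comp (tendsto_natCast_atTop_atTop.comp hn)).mul_const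
      (2 * k * (2 * (ℓ * (3 * ℓ * C) ^ k)))
  refine squeeze_zero_norm (fun j => ?_) hinv
  rw [norm_mul, norm_inv, Complex.norm_natCast]
  exact mul_le_mul_of_nonneg_left (norm_trace_Jn_pow_sub_sum_le hC (hb j) (n j) k) (by positivity)

end Boundary

section Toeplitz

variable {ℓ : ℕ} (γm γ0 γ1 : Matrix (Fin ℓ) (Fin ℓ) ℂ)

theorem toeplitzBlocks_add_add (i j r : ℤ) :
    toeplitzBlocks ℓ γm γ0 γ1 (i + r) (j + r) = toeplitzBlocks ℓ γm γ0 γ1 i j := by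
  unfold toeplitzBlocks
  split_ifs <;> first | rfl | omega

theorem tridiagPow_toeplitzBlocks_diag (k : ℕ) (p : ℤ) :
    tridiagPow (toeplitzBlocks ℓ γm γ0 γ1) k p p =
      tridiagPow (toeplitzBlocks ℓ γm γ0 γ1) k 0 0 := by
  simpa [toeplitzBlocks_add_add] using (tridiagPow_shift (toeplitzBlocks ℓ γm γ0 γ1) p k 0 0).symm

theorem exists_norm_toeplitzBlocks_le :
    ∃ C, 0 ≤ C ∧ ∀ p q x y, ‖toeplitzBlocks ℓ γm γ0 γ1 p q x y‖ ≤ C := by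
  refine ⟨∑ x, ∑ y, (‖γm x y‖ + ‖γ0 x y‖ + ‖γ1 x y‖), by positivity, fun p q x y => ?_⟩
  have hxy : ‖toeplitzBlocks ℓ γm γ0 γ1 p q x y‖ ≤ ‖γm x y‖ + ‖γ0 x y‖ + ‖γ1 x y‖ := by
    have := norm_nonneg (γm x y); have := norm_nonneg (γ0 x y); have := norm_nonneg (γ1 x y)
    simp only [toeplitzBlocks]
    split_ifs
    all_goals (try simp only [Matrix.zero_apply, norm_zero]); linarith
  refine hxy.trans ((Finset.single_le_sum (fun y _ => by positivity) (Finset.mem_univ y)).trans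
    (Finset.single_le_sum (f := fun x => ∑ y, (‖γm x y‖ + ‖γ0 x y‖ + ‖γ1 x y‖))
      (fun x _ => by positivity) (Finset.mem_univ x)))

theorem tendsto_inv_mul_trace_Jn_toeplitzBlocks_pow (k : ℕ) :
    Tendsto (fun n : ℕ => (n : ℂ)⁻¹ * (Jn ℓ n (toeplitzBlocks ℓ γm γ0 γ1) ^ k).trace) atTop
      (nhds (tridiagPow (toeplitzBlocks ℓ γm γ0 γ1) k 0 0).trace) := by
  obtain ⟨C, hC, hT⟩ := exists_norm_toeplitzBlocks_le γm γ0 γ1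
  have h := (tendsto_inv_mul_trace_Jn_pow_sub_sum hC (fun _ => hT) tendsto_id k).add_const
    (tridiagPow (toeplitzBlocks ℓ γm γ0 γ1) k 0 0).trace
  simp only [id, tridiagPow_toeplitzBlocks_diag, Finset.sum_const, Finset.card_range,
    nsmul_eq_mul, zero_add] at h
  refine h.congr' (eventually_ne_atTop 0 |>.mono fun n hn => ?_)
  field_simp
  ring

end Toeplitz

section Riemann

variable {E : Type*} [NormedAddCommGroup E] [NormedSpace ℝ E] [CompleteSpace E]

theorem integral_comp_natFloor (f : ℕ → E) (n : ℕ) :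
    ∫ u in (0 : ℝ)..n, f ⌊u⌋₊ = ∑ p ∈ Finset.range n, f p := by
  have hconst : ∀ p : ℕ, Set.EqOn (fun u : ℝ => f ⌊u⌋₊) (fun _ => f p) (Set.Ioo p (p + 1)) :=
    fun p u hu => by simp only [Nat.floor_eq_on_Ico p u (Set.Ioo_subset_Ico_self hu)]
  have hpiece : ∀ p : ℕ, ∫ u in (p : ℝ)..p + 1, f ⌊u⌋₊ = f p := fun p => by
    rw [intervalIntegral.integral_of_le (by simp), integral_Ioc_eq_integral_Ioo,
      setIntegral_congr_fun measurableSet_Ioo (hconst p), setIntegral_const]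
    simp
  have hint : ∀ p : ℕ, IntervalIntegrable (fun u => f ⌊u⌋₊) volume p (p + 1 : ℕ) := fun p => by
    rw [intervalIntegrable_iff_integrableOn_Ioo_of_le (by simp), Nat.cast_succ]
    exact (integrableOn_const measure_Ioo_lt_top.ne).congr_fun (hconst p).symm measurableSet_Ioo
  have := (intervalIntegral.sum_integral_adjacent_intervals (a := fun p : ℕ => (p : ℝ)) (n := n)
      fun p _ => hint p).symm
  simpa [hpiece] using this

theorem integral_comp_natFloor_mul (f : ℕ → E) {N : ℝ} (hN : 0 < N) (n : ℕ) :
    ∫ s in (0 : ℝ)..n / N, f ⌊s * N⌋₊ = N⁻¹ • ∑ p ∈ Finset.range n, f p := by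
  rw [intervalIntegral.integral_comp_mul_right (fun u => f ⌊u⌋₊) hN.ne', zero_mul,
    div_mul_cancel₀ _ hN.ne', integral_comp_natFloor]

end Riemann

theorem tendsto_inv_mul_sum_of_ae_tendsto {f : ℕ → ℕ → ℂ} {G : ℝ → ℂ} {D t : ℝ} (ht : 0 < t)
    (hf : ∀ j p, ‖f j p‖ ≤ D) {n N : ℕ → ℕ}
    (hnN : Tendsto (fun j => (n j : ℝ) / N j) atTop (nhds t))
    (hlim : ∀ᵐ s, s ∈ Set.Ioc 0 t → Tendsto (fun j => f j ⌊s * N j⌋₊) atTop (nhds (G s))) :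
    Tendsto (fun j => (n j : ℂ)⁻¹ * ∑ p ∈ Finset.range (n j), f j p) atTop
      (nhds ((t : ℂ)⁻¹ * ∫ s in (0 : ℝ)..t, G s)) := by
  set φ : ℕ → ℝ → ℂ := fun j s => f j ⌊s * N j⌋₊
  have hφ : ∀ j, Measurable (φ j) := fun j =>
    measurable_from_nat.comp (Nat.measurable_floor.comp (measurable_id.mul_const _))
  have hφint : ∀ j a b, IntervalIntegrable (φ j) volume a b := fun j a b =>
    intervalIntegrable_const.mono_fun' (hφ j).aestronglyMeasurable (ae_of_all _ fun s => hf j _)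
  have hsum : ∀ᶠ j in atTop, ((N j / n j : ℝ) : ℂ) * ∫ s in (0 : ℝ)..n j / N j, φ j s =
      (n j : ℂ)⁻¹ * ∑ p ∈ Finset.range (n j), f j p := by
    filter_upwards [hnN.eventually (eventually_gt_nhds ht)] with j hj
    have hN : N j ≠ 0 := fun h => by simp [h] at hj
    have hn : n j ≠ 0 := fun h => by simp [h] at hj
    rw [integral_comp_natFloor_mul _ (by positivity), Complex.real_smul]
    push_cast
    field_simp
  have hcoef : Tendsto (fun j => ((N j / n j : ℝ) : ℂ)) atTop (nhds (t : ℂ)⁻¹) := by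
    have h := hnN.inv₀ ht.ne'
    simp only [inv_div] at h
    simpa [Function.comp_def] using (Complex.continuous_ofReal.tendsto _).comp h
  have htail : Tendsto (fun j => (∫ s in (0 : ℝ)..n j / N j, φ j s) - ∫ s in (0 : ℝ)..t, φ j s)
      atTop (nhds 0) := by
    refine squeeze_zero_norm (fun j => ?_)
      (by simpa using ((hnN.sub_const t).abs).const_mul D)
    rw [intervalIntegral.integral_interval_sub_left (hφint _ _ _) (hφint _ _ _)]
    exact intervalIntegral.norm_integral_le_of_norm_le_const fun s _ => hf j _
  have hdom : Tendsto (fun j => ∫ s in (0 : ℝ)..t, φ j s) atTop (nhds (∫ s in (0 : ℝ)..t, G s)) :=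
    intervalIntegral.tendsto_integral_filter_of_dominated_convergence (fun _ => D)
      (.of_forall fun j => (hφ j).aestronglyMeasurable)
      (.of_forall fun j => ae_of_all _ fun s _ => hf j _) intervalIntegrable_const
      (by rwa [Set.uIoc_of_le ht.le])
  exact (hcoef.mul (by simpa using htail.add hdom)).congr' hsum

/-- `TendstoAsRatio F s x` is the paper's `lim_{n/N → s} F N n = x`. -/
def TendstoAsRatio {X : Type*} [TopologicalSpace X] (F : ℕ → ℤ → X) (s : ℝ) (x : X) : Prop :=
  ∀ n N : ℕ → ℕ, Tendsto n atTop atTop → Tendsto N atTop atTop →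
    Tendsto (fun j => (n j : ℝ) / (N j : ℝ)) atTop (nhds s) →
    Tendsto (fun j => F (N j) (n j)) atTop (nhds x)

theorem TendstoAsRatio.tendsto_natFloor_add {X : Type*} [TopologicalSpace X] {F : ℕ → ℤ → X}
    {s : ℝ} {x : X} (h : TendstoAsRatio F s x) (hs : 0 < s) {N : ℕ → ℕ}
    (hN : Tendsto N atTop atTop) (c : ℤ) :
    Tendsto (fun j => F (N j) (⌊s * N j⌋₊ + c)) atTop (nhds x) := by
  set P : ℕ → ℕ := fun j => ⌊s * N j⌋₊
  have hNreal : Tendsto (fun j => (N j : ℝ)) atTop atTop := tendsto_natCast_atTop_atTop.comp hN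
  have hP : Tendsto P atTop atTop := (tendsto_nat_floor_mul_atTop s hs).comp hN
  have hPN : Tendsto (fun j => (P j : ℝ) / N j) atTop (nhds s) :=
    (tendsto_nat_floor_mul_div_atTop hs.le).comp hNreal
  have heq : ∀ᶠ j in atTop, (((P j + c).toNat : ℕ) : ℤ) = P j + c := by
    filter_upwards [hP.eventually_ge_atTop c.natAbs] with j hj
    omega
  have hn : Tendsto (fun j => (P j + c).toNat) atTop atTop := by
    refine tendsto_atTop_mono' atTop ?_ ((tendsto_sub_atTop_nat c.natAbs).comp hP)
    filter_upwards [heq] with j hj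
    simp only [Function.comp]
    omega
  have hratio : Tendsto (fun j => (((P j + c).toNat : ℕ) : ℝ) / N j) atTop (nhds s) := by
    have hc : Tendsto (fun j => (c : ℝ) / N j) atTop (nhds 0) :=
      tendsto_const_nhds.div_atTop hNreal
    refine (by simpa using hPN.add hc : Tendsto _ _ _).congr' ?_
    filter_upwards [heq] with j hj
    rw [← add_div]
    congr 1
    exact_mod_cast hj.symm
  refine (h _ N hn hN hratio).congr' ?_
  filter_upwards [heq] with j hj
  rw [hj]

theorem tendsto_tridiagPow_natFloor {ℓ : ℕ} {a : ℕ → ℤ → ℤ → Matrix (Fin ℓ) (Fin ℓ) ℂ}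
    {γm γ0 γ1 : Matrix (Fin ℓ) (Fin ℓ) ℂ} {s : ℝ} (hs : 0 < s)
    (hm : TendstoAsRatio (fun M m => a M (m - 1) m) s γm)
    (h0 : TendstoAsRatio (fun M m => a M m m) s γ0)
    (h1 : TendstoAsRatio (fun M m => a M (m + 1) m) s γ1)
    {N : ℕ → ℕ} (hN : Tendsto N atTop atTop) (k : ℕ) :
    Tendsto (fun j => tridiagPow (a (N j)) k ⌊s * N j⌋₊ ⌊s * N j⌋₊) atTop
      (nhds (tridiagPow (toeplitzBlocks ℓ γm γ0 γ1) k 0 0)) := by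
  have hshift : ∀ j, tridiagPow (fun u v => a (N j) (u + ⌊s * N j⌋₊) (v + ⌊s * N j⌋₊)) k 0 0 =
      tridiagPow (a (N j)) k ⌊s * N j⌋₊ ⌊s * N j⌋₊ := fun j => by
    simpa using tridiagPow_shift (a (N j)) ⌊s * N j⌋₊ k 0 0
  refine (tendsto_tridiagPow (fun i i' _ hii' => ?_) 0).congr hshift
  rw [abs_le] at hii'
  obtain h | h | h : i' = i + 1 ∨ i' = i ∨ i' = i - 1 := by omega
  · rw [h, toeplitzBlocks, if_pos rfl]
    refine (hm.tendsto_natFloor_add hs hN (i + 1)).congr fun j => ?_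
    congr 1 <;> ring
  · rw [h, toeplitzBlocks, if_neg (by omega), if_pos rfl]
    refine (h0.tendsto_natFloor_add hs hN i).congr fun j => ?_
    congr 1 <;> ring
  · rw [h, toeplitzBlocks, if_neg (by omega), if_neg (by omega), if_pos (by ring)]
    refine (h1.tendsto_natFloor_add hs hN (i - 1)).congr fun j => ?_
    congr 1 <;> ring

theorem stmt11_general (ℓ : ℕ) (t : ℝ) (ht : 0 < t)
    (γm γ0 γ1 : ℝ → Matrix (Fin ℓ) (Fin ℓ) ℂ)
    (a : ℕ → ℤ → ℤ → Matrix (Fin ℓ) (Fin ℓ) ℂ)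
    (hbd : ∃ C : ℝ, ∀ (Nn : ℕ) (j k : ℤ) (x y : Fin ℓ), ‖a Nn j k x y‖ ≤ C)
    (hlimm : ∀ᵐ s ∂(volume.restrict (Set.Icc (0 : ℝ) t)),
      ∀ n N : ℕ → ℕ, Tendsto n atTop atTop → Tendsto N atTop atTop →
        Tendsto (fun j => (n j : ℝ) / (N j : ℝ)) atTop (nhds s) →
        Tendsto (fun j => a (N j) ((n j : ℤ) - 1) ((n j : ℤ))) atTop (nhds (γm s)))
    (hlim0 : ∀ᵐ s ∂(volume.restrict (Set.Icc (0 : ℝ) t)),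
      ∀ n N : ℕ → ℕ, Tendsto n atTop atTop → Tendsto N atTop atTop →
        Tendsto (fun j => (n j : ℝ) / (N j : ℝ)) atTop (nhds s) →
        Tendsto (fun j => a (N j) ((n j : ℤ)) ((n j : ℤ))) atTop (nhds (γ0 s)))
    (hlim1 : ∀ᵐ s ∂(volume.restrict (Set.Icc (0 : ℝ) t)),
      ∀ n N : ℕ → ℕ, Tendsto n atTop atTop → Tendsto N atTop atTop →
        Tendsto (fun j => (n j : ℝ) / (N j : ℝ)) atTop (nhds s) →
        Tendsto (fun j => a (N j) ((n j : ℤ) + 1) ((n j : ℤ))) atTop (nhds (γ1 s)))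
    (ν : ℝ → Measure ℂ)
    (hν : ∀ᵐ s ∂(volume.restrict (Set.Icc (0 : ℝ) t)),
      IsFiniteMeasure (ν s) ∧ (∃ K : Set ℂ, IsCompact K ∧ ν s Kᶜ = 0) ∧
      ∀ k : ℕ, Tendsto
        (fun n : ℕ => ((n : ℂ))⁻¹ *
          Matrix.trace ((Jn ℓ n (toeplitzBlocks ℓ (γm s) (γ0 s) (γ1 s))) ^ k))
        atTop (nhds (∫ z, z ^ k ∂(ν s)))) :
    ∀ k : ℕ, ∀ n N : ℕ → ℕ, Tendsto n atTop atTop → Tendsto N atTop atTop →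
      Tendsto (fun j => (n j : ℝ) / (N j : ℝ)) atTop (nhds t) →
      Tendsto (fun j => ((n j : ℂ))⁻¹ * Matrix.trace ((Jn ℓ (n j) (a (N j))) ^ k))
        atTop (nhds ((t : ℂ)⁻¹ * ∫ s in (0 : ℝ)..t, ∫ z, z ^ k ∂(ν s))) := by
  intro k n N hn hN hnN
  obtain ⟨C, hC⟩ := hbd
  have ha : ∀ j p q x y, ‖a (N j) p q x y‖ ≤ max C 0 := fun j p q x y =>
    (hC _ p q x y).trans (le_max_left _ _)
  set G : ℝ → ℂ := fun s => (tridiagPow (toeplitzBlocks ℓ (γm s) (γ0 s) (γ1 s)) k 0 0).trace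
  have hmoment : ∫ s in (0 : ℝ)..t, ∫ z, z ^ k ∂(ν s) = ∫ s in (0 : ℝ)..t, G s := by
    refine intervalIntegral.integral_congr_ae ?_
    rw [Set.uIoc_of_le ht.le]
    filter_upwards [(ae_restrict_iff' measurableSet_Icc).1 hν] with s hs hsI
    exact tendsto_nhds_unique ((hs (Set.Ioc_subset_Icc_self hsI)).2.2 k)
      (tendsto_inv_mul_trace_Jn_toeplitzBlocks_pow _ _ _ k)
  have hlocal : ∀ᵐ s, s ∈ Set.Ioc 0 t → Tendsto
      (fun j => (tridiagPow (a (N j)) k ⌊s * N j⌋₊ ⌊s * N j⌋₊).trace) atTop (nhds (G s)) := by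
    filter_upwards [(ae_restrict_iff' measurableSet_Icc).1 (hlimm.and (hlim0.and hlim1))]
      with s hs hsI
    obtain ⟨hm, h0, h1⟩ := hs (Set.Ioc_subset_Icc_self hsI)
    exact (continuous_id.matrix_trace.tendsto _).comp
      (tendsto_tridiagPow_natFloor hsI.1 hm h0 h1 hN k)
  have hriemann := tendsto_inv_mul_sum_of_ae_tendsto
    (f := fun j p => (tridiagPow (a (N j)) k p p).trace) ht
    (fun j p => norm_trace_tridiagPow_le (le_max_right C 0) (ha j) k p p) hnN hlocal
  have hlim := (tendsto_inv_mul_trace_Jn_pow_sub_sum (le_max_right C 0) ha hn k).add hriemann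
  rw [zero_add, ← hmoment] at hlim
  exact hlim.congr fun j => by ring

/-- Method of moments for variable block tridiagonal (locally Toeplitz) matrices. -/
theorem stmt11 (ℓ : ℕ) (hℓ : 0 < ℓ) (t : ℝ) (ht : 0 < t)
    (γm γ0 γ1 : ℝ → Matrix (Fin ℓ) (Fin ℓ) ℂ)
    (hγm : ∀ x y, Measurable fun s => γm s x y)
    (hγ0 : ∀ x y, Measurable fun s => γ0 s x y)
    (hγ1 : ∀ x y, Measurable fun s => γ1 s x y)
    (a : ℕ → ℤ → ℤ → Matrix (Fin ℓ) (Fin ℓ) ℂ)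
    (hbd : ∃ C : ℝ, ∀ (Nn : ℕ) (j k : ℤ) (x y : Fin ℓ), ‖a Nn j k x y‖ ≤ C)
    (hlimm : ∀ᵐ s ∂(volume.restrict (Set.Icc (0 : ℝ) t)),
      ∀ n N : ℕ → ℕ, Tendsto n atTop atTop → Tendsto N atTop atTop →
        Tendsto (fun j => (n j : ℝ) / (N j : ℝ)) atTop (nhds s) →
        Tendsto (fun j => a (N j) ((n j : ℤ) - 1) ((n j : ℤ))) atTop (nhds (γm s)))
    (hlim0 : ∀ᵐ s ∂(volume.restrict (Set.Icc (0 : ℝ) t)),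
      ∀ n N : ℕ → ℕ, Tendsto n atTop atTop → Tendsto N atTop atTop →
        Tendsto (fun j => (n j : ℝ) / (N j : ℝ)) atTop (nhds s) →
        Tendsto (fun j => a (N j) ((n j : ℤ)) ((n j : ℤ))) atTop (nhds (γ0 s)))
    (hlim1 : ∀ᵐ s ∂(volume.restrict (Set.Icc (0 : ℝ) t)),
      ∀ n N : ℕ → ℕ, Tendsto n atTop atTop → Tendsto N atTop atTop →
        Tendsto (fun j => (n j : ℝ) / (N j : ℝ)) atTop (nhds s) →
        Tendsto (fun j => a (N j) ((n j : ℤ) + 1) ((n j : ℤ))) atTop (nhds (γ1 s)))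
    (ν : ℝ → Measure ℂ)
    (hν : ∀ᵐ s ∂(volume.restrict (Set.Icc (0 : ℝ) t)),
      IsFiniteMeasure (ν s) ∧ (∃ K : Set ℂ, IsCompact K ∧ ν s Kᶜ = 0) ∧
      ∀ k : ℕ, Tendsto
        (fun n : ℕ => ((n : ℂ))⁻¹ *
          Matrix.trace ((Jn ℓ n (toeplitzBlocks ℓ (γm s) (γ0 s) (γ1 s))) ^ k))
        atTop (nhds (∫ z, z ^ k ∂(ν s)))) :
    ∀ k : ℕ, ∀ n N : ℕ → ℕ, Tendsto n atTop atTop → Tendsto N atTop atTop →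
      Tendsto (fun j => (n j : ℝ) / (N j : ℝ)) atTop (nhds t) →
      Tendsto (fun j => ((n j : ℂ))⁻¹ * Matrix.trace ((Jn ℓ (n j) (a (N j))) ^ k))
        atTop (nhds ((t : ℂ)⁻¹ * ∫ s in (0 : ℝ)..t, ∫ z, z ^ k ∂(ν s))) :=
  stmt11_general ℓ t ht γm γ0 γ1 a hbd hlimm hlim0 hlim1 ν hν

end
end

section
/- Let t > 0 and let f : [0,t] → [0,1] be continuous and strictly increasing on (0,t). For θ ∈ (θ_{f(0)}, 2π − θ_{f(0)}), set u(θ) = t if f(t) ≤ sin(θ/2), and otherwise let u(θ) be the unique s ∈ (0,t) with f(s) = sin(θ/2). Then for every continuous function g : ∂D → ℂ, (1/t) ∫_0^t (∫_{∂D} g dν_{f(s)}) ds = ∫_{θ_{f(0)}}^{2π − θ_{f(0)}} g(e^{iθ}) · D_t(θ) dθ, where D_t(θ) = (1/(2πt)) ∫_0^{u(θ)} sin(θ/2)/√(sin²(θ/2) − f(s)²) ds. In particular, the average measure σ_t = (1/t)∫_0^t ν_{f(s)} ds is absolutely continuous with density D_t and support {e^{iθ} : θ_{f(0)} ≤ θ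 ≤ 2π − θ_{f(0)}}. -/
/-!
Write `ν_a = (2π)⁻¹ k_a(θ) dθ` with `k_a(θ) = sin(θ/2) / √(sin²(θ/2) - a²)`. Since
`f 0 ≤ f s`, the arc of `ν_{f s}` lies inside the arc of `ν_{f 0}`, and `k_{f s}` vanishes on the
rest of it; so both sides are integrals over the rectangle `(0, t) × (θ_{f 0}, 2π - θ_{f 0})`.
The primitive `-2 arcsin (cos(θ/2) / √(1 - a²))` gives `∫ k_a = 2π`, which makes
`k_{f s}(θ) g(e^{iθ})` integrable on the rectangle, and Fubini exchanges the two integrals. For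
fixed `θ`, `k_{f s}(θ) = 0` as soon as `f s ≥ sin(θ/2)`, i.e. for `s ≥ u θ`. The endpoints
`s = 0, t` (where `ν_{f t}` may be the point mass `ν_1`) are null sets.
-/

open Filter MeasureTheory

noncomputable section

def thetaA (a : ℝ) : ℝ := 2 * Real.arcsin a

/-- Integral of `g` against the equilibrium measure `ν_a` of the circular arc `Γ_a`
(for `a = 1`, `ν_1 = δ_{-1}`). -/
def nuInt (a : ℝ) (g : ℂ → ℂ) : ℂ :=
  if a = 1 then g (-1)
  else ∫ θ in thetaA a..(2 * Real.pi - thetaA a),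
    ((1 / (2 * Real.pi) * Real.sin (θ / 2) /
        Real.sqrt (Real.cos (thetaA a / 2) ^ 2 - Real.cos (θ / 2) ^ 2) : ℝ) : ℂ) *
      g (Complex.exp (θ * Complex.I))

open Real Set

lemma MonotoneOn.apply_left_le_of_continuousOn {α β : Type*} [LinearOrder α] [TopologicalSpace α]
    [OrderTopology α] [DenselyOrdered α] [Preorder β] [TopologicalSpace β] [ClosedIicTopology β]
    {f : α → β} {c d x : α} (hmono : MonotoneOn f (Ioo c d)) (hcont : ContinuousOn f (Ico c d))
    (hx : x ∈ Ioo c d) : f c ≤ f x := by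
  have hmaps : MapsTo f (Ioo c x) (Iic (f x)) :=
    fun y hy => hmono ⟨hy.1, hy.2.trans hx.2⟩ hx hy.2.le
  have := hmaps.closure_of_continuousOn (by
    rw [closure_Ioo hx.1.ne]; exact hcont.mono (Icc_subset_Ico_right hx.2))
  rw [closure_Ioo hx.1.ne, isClosed_Iic.closure_eq] at this
  exact this ⟨le_rfl, hx.1.le⟩

lemma StrictMonoOn.apply_lt_of_forall_le {α β : Type*} [LinearOrder α] [DenselyOrdered α]
    [Preorder β] {f : α → β} {c d x : α} {M : β} (hmono : StrictMonoOn f (Ioo c d))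
    (hM : ∀ y ∈ Ioo c d, f y ≤ M) (hx : x ∈ Ioo c d) : f x < M := by
  obtain ⟨y, hxy, hyd⟩ := exists_between hx.2
  exact (hmono hx ⟨hx.1.trans hxy, hyd⟩ hxy).trans_le (hM y ⟨hx.1.trans hxy, hyd⟩)

def arcInterval (a : ℝ) : Set ℝ := Ioo (thetaA a) (2 * π - thetaA a)

def arcKernel (a θ : ℝ) : ℝ := sin (θ / 2) / Real.sqrt (sin (θ / 2) ^ 2 - a ^ 2)

lemma thetaA_nonneg {a : ℝ} (ha : 0 ≤ a) : 0 ≤ thetaA a := by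
  unfold thetaA; linarith [arcsin_nonneg.2 ha]

lemma thetaA_le_pi (a : ℝ) : thetaA a ≤ π := by
  unfold thetaA; linarith [arcsin_le_pi_div_two a]

lemma thetaA_le_two_pi_sub_thetaA (a : ℝ) : thetaA a ≤ 2 * π - thetaA a := by
  linarith [thetaA_le_pi a]

lemma thetaA_mono : Monotone thetaA := fun _ _ h => by
  unfold thetaA; linarith [arcsin_le_arcsin h]

lemma arcInterval_subset_Icc {a : ℝ} (ha : 0 ≤ a) : arcInterval a ⊆ Icc 0 (2 * π) :=
  fun _ hθ => ⟨by linarith [hθ.1, thetaA_nonneg ha], by linarith [hθ.2, thetaA_nonneg ha]⟩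

lemma measurableSet_arcInterval (a : ℝ) : MeasurableSet (arcInterval a) := measurableSet_Ioo

lemma arcInterval_antitone : Antitone arcInterval := fun _ _ h =>
  Ioo_subset_Ioo (thetaA_mono h) (by linarith [thetaA_mono h])

lemma mem_arcInterval_iff {a θ : ℝ} (hθ : θ ∈ Icc 0 (2 * π)) :
    θ ∈ arcInterval a ↔ a < sin (θ / 2) := by
  have hpi := pi_pos
  have ha := neg_pi_div_two_le_arcsin a
  have ha' := arcsin_le_pi_div_two a
  obtain ⟨h0, h2π⟩ := hθ
  simp only [arcInterval, thetaA, mem_Ioo]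
  rcases le_or_gt (θ / 2) (π / 2) with hθ2 | hθ2
  · have := arcsin_lt_iff_lt_sin' (x := a) ⟨by linarith, hθ2⟩
    constructor
    · exact fun h => this.1 (by linarith [h.1])
    · exact fun h => ⟨by linarith [this.2 h], by
        linarith [arcsin_lt_pi_div_two.2 (h.trans_le (sin_le_one _))]⟩
  · have := arcsin_lt_iff_lt_sin' (x := a) (y := π - θ / 2) ⟨by linarith, by linarith⟩
    rw [sin_pi_sub] at this
    constructor
    · exact fun h => this.1 (by linarith [h.2])
    · exact fun h => ⟨by linarith [arcsin_lt_pi_div_two.2 (h.trans_le (sin_le_one _))],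
        by linarith [this.2 h]⟩

lemma sin_half_nonneg {θ : ℝ} (hθ : θ ∈ Icc 0 (2 * π)) : 0 ≤ sin (θ / 2) :=
  sin_nonneg_of_nonneg_of_le_pi (by linarith [hθ.1]) (by linarith [hθ.2])

-- `Real.sqrt` is `0` on nonpositive arguments and `x / 0 = 0`, so the kernel vanishes off its arc.
lemma arcKernel_eq_zero_of_sin_le {a θ : ℝ} (h0 : 0 ≤ sin (θ / 2)) (h : sin (θ / 2) ≤ a) :
    arcKernel a θ = 0 := by
  rw [arcKernel, Real.sqrt_eq_zero'.2 (by nlinarith), div_zero]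

lemma arcKernel_eq_zero_of_notMem {a θ : ℝ} (hθ : θ ∈ Icc 0 (2 * π)) (h : θ ∉ arcInterval a) :
    arcKernel a θ = 0 :=
  arcKernel_eq_zero_of_sin_le (sin_half_nonneg hθ)
    (not_lt.1 fun h' => h ((mem_arcInterval_iff hθ).2 h'))

lemma arcKernel_nonneg {a θ : ℝ} (hθ : θ ∈ Icc 0 (2 * π)) : 0 ≤ arcKernel a θ :=
  div_nonneg (sin_half_nonneg hθ) (Real.sqrt_nonneg _)

lemma measurable_arcKernel : Measurable (Function.uncurry arcKernel) := by
  unfold arcKernel; fun_prop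

def arcKernelPrimitive (a θ : ℝ) : ℝ := -2 * arcsin (cos (θ / 2) / Real.sqrt (1 - a ^ 2))

lemma continuous_arcKernelPrimitive (a : ℝ) : Continuous (arcKernelPrimitive a) := by
  unfold arcKernelPrimitive; fun_prop

lemma hasDerivAt_arcKernelPrimitive {a θ : ℝ} (h : a ^ 2 < sin (θ / 2) ^ 2) :
    HasDerivAt (arcKernelPrimitive a) (arcKernel a θ) θ := by
  have hsc := sin_sq_add_cos_sq (θ / 2)
  set c := Real.sqrt (1 - a ^ 2)
  have hc2 : c ^ 2 = 1 - a ^ 2 := Real.sq_sqrt (by nlinarith)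
  have hc : 0 < c := Real.sqrt_pos.2 (by nlinarith)
  have hx : (cos (θ / 2) / c) ^ 2 < 1 := by
    rw [div_pow, div_lt_one (by positivity)]; linarith
  have hsqrt : Real.sqrt (1 - (cos (θ / 2) / c) ^ 2) = Real.sqrt (sin (θ / 2) ^ 2 - a ^ 2) / c := by
    have : 1 - (cos (θ / 2) / c) ^ 2 = (sin (θ / 2) ^ 2 - a ^ 2) / c ^ 2 := by
      field_simp; linarith
    rw [this, Real.sqrt_div' _ (sq_nonneg c), Real.sqrt_sq hc.le]
  have hpos : 0 < Real.sqrt (sin (θ / 2) ^ 2 - a ^ 2) := Real.sqrt_pos.2 (by linarith)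
  have hd := ((hasDerivAt_arcsin (fun h => by rw [h] at hx; norm_num at hx)
    (fun h => by rw [h] at hx; norm_num at hx)).comp θ
    (((hasDerivAt_id' θ).div_const 2).cos.div_const c)).const_mul (-2 : ℝ)
  refine hd.congr_deriv ?_
  rw [hsqrt, arcKernel]
  field_simp

lemma sq_lt_sin_sq_of_mem_arcInterval {a θ : ℝ} (ha : 0 ≤ a) (hθ : θ ∈ arcInterval a) :
    a ^ 2 < sin (θ / 2) ^ 2 := by
  have := (mem_arcInterval_iff (arcInterval_subset_Icc ha hθ)).1 hθ
  nlinarith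

lemma integrableOn_arcKernel {a : ℝ} (ha : 0 ≤ a) :
    IntegrableOn (arcKernel a) (arcInterval a) :=
  (intervalIntegral.integrableOn_deriv_of_nonneg (continuous_arcKernelPrimitive a).continuousOn
    (fun _ hθ => hasDerivAt_arcKernelPrimitive (sq_lt_sin_sq_of_mem_arcInterval ha hθ))
    (fun _ hθ => arcKernel_nonneg (arcInterval_subset_Icc ha hθ))).mono_set Ioo_subset_Ioc_self

lemma integral_arcKernel {a : ℝ} (ha0 : 0 ≤ a) (ha1 : a < 1) :
    ∫ θ in arcInterval a, arcKernel a θ = 2 * π := by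
  have hc : Real.sqrt (1 - a ^ 2) ≠ 0 := (Real.sqrt_pos.2 (by nlinarith)).ne'
  rw [arcInterval, ← integral_Ioc_eq_integral_Ioo,
    ← intervalIntegral.integral_of_le (thetaA_le_two_pi_sub_thetaA a),
    intervalIntegral.integral_eq_sub_of_hasDerivAt_of_le (thetaA_le_two_pi_sub_thetaA a)
      (continuous_arcKernelPrimitive a).continuousOn
      (fun _ hθ => hasDerivAt_arcKernelPrimitive (sq_lt_sin_sq_of_mem_arcInterval ha0 hθ))
      ((intervalIntegrable_iff_integrableOn_Ioo_of_le (thetaA_le_two_pi_sub_thetaA a)).2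
        (integrableOn_arcKernel ha0))]
  have h1 : (2 * π - thetaA a) / 2 = π - arcsin a := by unfold thetaA; ring
  have h2 : thetaA a / 2 = arcsin a := by unfold thetaA; ring
  simp only [arcKernelPrimitive, h1, h2, cos_pi_sub, cos_arcsin, neg_div, div_self hc,
    arcsin_neg, arcsin_one]
  ring

section ArcKernelSmul

variable {E : Type*} [NormedAddCommGroup E] [NormedSpace ℝ E]

lemma integrableOn_arcKernel_of_le {a b : ℝ} (hb : 0 ≤ b) (hba : b ≤ a) :
    IntegrableOn (arcKernel a) (arcInterval b) :=
  (integrableOn_arcKernel (hb.trans hba)).of_forall_sdiff_eq_zero (measurableSet_arcInterval b)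
    fun _ hθ => arcKernel_eq_zero_of_notMem (arcInterval_subset_Icc hb hθ.1) hθ.2

lemma setIntegral_arcInterval_of_le {a b : ℝ} (hb : 0 ≤ b) (hba : b ≤ a) (φ : ℝ → E) :
    ∫ θ in arcInterval b, arcKernel a θ • φ θ = ∫ θ in arcInterval a, arcKernel a θ • φ θ := by
  refine (setIntegral_eq_of_subset_of_forall_sdiff_eq_zero (f := fun θ => arcKernel a θ • φ θ)
    (measurableSet_arcInterval b) (arcInterval_antitone hba) fun θ hθ => ?_)
  rw [arcKernel_eq_zero_of_notMem (arcInterval_subset_Icc hb hθ.1) hθ.2, zero_smul]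

lemma integral_arcKernel_of_le {a b : ℝ} (hb : 0 ≤ b) (hba : b ≤ a) (ha : a < 1) :
    ∫ θ in arcInterval b, arcKernel a θ = 2 * π := by
  simpa using (setIntegral_arcInterval_of_le hb hba (fun _ => (1 : ℝ))).trans
    (by simpa using integral_arcKernel (hb.trans hba) ha)

lemma integrable_arcKernel_smul {c d b : ℝ} {f : ℝ → ℝ}
    (hcont : ContinuousOn f (Ioo c d)) (hb : 0 ≤ b) (hf : ∀ s ∈ Ioo c d, b ≤ f s ∧ f s < 1)
    {φ : ℝ → E} (hφ : Continuous φ) :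
    Integrable (fun p : ℝ × ℝ => arcKernel (f p.1) p.2 • φ p.2)
      ((volume.restrict (Ioo c d)).prod (volume.restrict (arcInterval b))) := by
  obtain ⟨M, hM⟩ := (isCompact_Icc (a := 0) (b := 2 * π)).exists_bound_of_continuousOn
    hφ.continuousOn
  have hmeas : AEStronglyMeasurable (fun p : ℝ × ℝ => arcKernel (f p.1) p.2 • φ p.2)
      ((volume.restrict (Ioo c d)).prod (volume.restrict (arcInterval b))) := by
    rw [Measure.prod_restrict]
    refine AEStronglyMeasurable.smul ?_ (hφ.comp continuous_snd).aestronglyMeasurable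
    exact (measurable_arcKernel.comp_aemeasurable
      (((hcont.comp continuousOn_fst fun _ hp => hp.1).prodMk continuousOn_snd).aemeasurable
        (measurableSet_Ioo.prod (measurableSet_arcInterval b)))).aestronglyMeasurable
  have hbound : ∀ θ ∈ arcInterval b, ‖φ θ‖ ≤ M := fun θ hθ => hM θ (arcInterval_subset_Icc hb hθ)
  rw [integrable_prod_iff hmeas]
  refine ⟨(ae_restrict_iff' measurableSet_Ioo).2 (Eventually.of_forall fun s hs =>
    (integrableOn_arcKernel_of_le hb (hf s hs).1).smul_bdd M hφ.aestronglyMeasurable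
      ((ae_restrict_iff' (measurableSet_arcInterval b)).2 (Eventually.of_forall hbound))), ?_⟩
  refine Integrable.mono' (integrable_const (2 * π * M)) hmeas.norm.integral_prod_right'
    ((ae_restrict_iff' measurableSet_Ioo).2 (Eventually.of_forall fun s hs => ?_))
  have hK := integrableOn_arcKernel_of_le hb (hf s hs).1
  rw [Real.norm_of_nonneg (integral_nonneg fun _ => norm_nonneg _)]
  calc ∫ θ in arcInterval b, ‖arcKernel (f s) θ • φ θ‖
      ≤ ∫ θ in arcInterval b, arcKernel (f s) θ * M :=
        integral_mono_of_nonneg (ae_of_all _ fun _ => norm_nonneg _) (hK.mul_const M)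
          ((ae_restrict_iff' (measurableSet_arcInterval b)).2 (Eventually.of_forall
            fun θ hθ => by
              have hK0 := arcKernel_nonneg (a := f s) (arcInterval_subset_Icc hb hθ)
              simp only [norm_smul]
              rw [Real.norm_of_nonneg hK0]
              exact mul_le_mul_of_nonneg_left (hbound θ hθ) hK0))
    _ = 2 * π * M := by
        rw [integral_mul_const, integral_arcKernel_of_le hb (hf s hs).1 (hf s hs).2]

end ArcKernelSmul

lemma nuInt_eq_setIntegral {a b : ℝ} (hb : 0 ≤ b) (hba : b ≤ a) (ha : a < 1) (g : ℂ → ℂ) :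
    nuInt a g =
      (2 * π)⁻¹ • ∫ θ in arcInterval b, arcKernel a θ • g (Complex.exp (θ * Complex.I)) := by
  have ha0 := hb.trans hba
  rw [nuInt, if_neg ha.ne, setIntegral_arcInterval_of_le hb hba,
    intervalIntegral.integral_of_le (thetaA_le_two_pi_sub_thetaA a), integral_Ioc_eq_integral_Ioo,
    ← integral_smul]
  refine setIntegral_congr_fun measurableSet_Ioo fun θ _ => ?_
  have hcos : cos (thetaA a / 2) ^ 2 - cos (θ / 2) ^ 2 = sin (θ / 2) ^ 2 - a ^ 2 := by
    rw [show thetaA a / 2 = arcsin a by unfold thetaA; ring, cos_arcsin,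
      Real.sq_sqrt (by nlinarith)]
    linarith [sin_sq_add_cos_sq (θ / 2)]
  simp only [hcos, arcKernel, Complex.real_smul]
  push_cast
  ring

lemma integral_Ioo_arcKernel_eq_intervalIntegral {c t θ v : ℝ} {f : ℝ → ℝ} (hct : c ≤ t)
    (hmono : MonotoneOn f (Ioo c t)) (hsin : 0 ≤ sin (θ / 2))
    (hv : (f t ≤ sin (θ / 2) → v = t) ∧ (sin (θ / 2) < f t → v ∈ Ioo c t ∧ f v = sin (θ / 2))) :
    ∫ s in Ioo c t, arcKernel (f s) θ = ∫ s in c..v, arcKernel (f s) θ := by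
  rcases le_or_gt (f t) (sin (θ / 2)) with h | h
  · rw [hv.1 h, intervalIntegral.integral_of_le hct, integral_Ioc_eq_integral_Ioo]
  · obtain ⟨hvt, hfv⟩ := hv.2 h
    rw [intervalIntegral.integral_of_le hvt.1.le, integral_Ioc_eq_integral_Ioo]
    -- beyond `v` we have `sin (θ / 2) = f v ≤ f s`, where the kernel vanishes
    exact setIntegral_eq_of_subset_of_forall_sdiff_eq_zero measurableSet_Ioo
      (Ioo_subset_Ioo_right hvt.2.le) fun s hs => arcKernel_eq_zero_of_sin_le hsin
        (hfv ▸ hmono hvt hs.1 (not_lt.1 fun h' => hs.2 ⟨hs.1.1, h'⟩))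

/-- For a continuous, strictly increasing sampling function `f : [0,t] → [0,1]`, the
averaged equilibrium measure `(1/t)∫_0^t ν_{f(s)} ds` is absolutely continuous with the
explicit density `D_t` on the arc `{e^{iθ} : θ_{f(0)} ≤ θ ≤ 2π - θ_{f(0)}}`. -/
theorem stmt17 (t : ℝ) (ht : 0 < t) (f : ℝ → ℝ)
    (hmap : ∀ s ∈ Set.Icc (0 : ℝ) t, f s ∈ Set.Icc (0 : ℝ) 1)
    (hcont : ContinuousOn f (Set.Icc (0 : ℝ) t))
    (hmono : StrictMonoOn f (Set.Ioo (0 : ℝ) t))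
    (u : ℝ → ℝ)
    (hu : ∀ θ ∈ Set.Ioo (thetaA (f 0)) (2 * Real.pi - thetaA (f 0)),
      (f t ≤ Real.sin (θ / 2) → u θ = t) ∧
      (Real.sin (θ / 2) < f t → u θ ∈ Set.Ioo (0 : ℝ) t ∧ f (u θ) = Real.sin (θ / 2)))
    (g : ℂ → ℂ) (hg : Continuous g) :
    (t : ℂ)⁻¹ * (∫ s in (0 : ℝ)..t, nuInt (f s) g)
      = ∫ θ in thetaA (f 0)..(2 * Real.pi - thetaA (f 0)),
          g (Complex.exp (θ * Complex.I)) *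
            (((1 / (2 * Real.pi * t)) *
              ∫ s in (0 : ℝ)..(u θ),
                Real.sin (θ / 2) / Real.sqrt (Real.sin (θ / 2) ^ 2 - f s ^ 2) : ℝ) : ℂ) := by
  simp only [← arcKernel.eq_1]
  have hf0 : 0 ≤ f 0 := (hmap 0 ⟨le_rfl, ht.le⟩).1
  have hfs : ∀ s ∈ Ioo 0 t, f 0 ≤ f s ∧ f s < 1 := fun s hs =>
    ⟨hmono.monotoneOn.apply_left_le_of_continuousOn (hcont.mono Ico_subset_Icc_self) hs,
      hmono.apply_lt_of_forall_le (fun y hy => (hmap y (Ioo_subset_Icc_self hy)).2) hs⟩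
  set φ : ℝ → ℂ := fun θ => g (Complex.exp (θ * Complex.I))
  have hswap := integral_integral_swap (f := fun s θ => arcKernel (f s) θ • φ θ)
    (integrable_arcKernel_smul (hcont.mono Ioo_subset_Icc_self) hf0 hfs (φ := φ) (by fun_prop))
  calc (t : ℂ)⁻¹ * ∫ s in 0..t, nuInt (f s) g
      = (t : ℂ)⁻¹ * ((2 * π)⁻¹ •
          ∫ s in Ioo 0 t, ∫ θ in arcInterval (f 0), arcKernel (f s) θ • φ θ) := by
        rw [intervalIntegral.integral_of_le ht.le, integral_Ioc_eq_integral_Ioo, ← integral_smul]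
        exact congrArg _ (setIntegral_congr_fun measurableSet_Ioo fun s hs =>
          nuInt_eq_setIntegral hf0 (hfs s hs).1 (hfs s hs).2 g)
    _ = (t : ℂ)⁻¹ * ((2 * π)⁻¹ •
          ∫ θ in arcInterval (f 0), (∫ s in Ioo 0 t, arcKernel (f s) θ) • φ θ) := by
        simp only [hswap, integral_smul_const]
    _ = _ := by
        rw [intervalIntegral.integral_of_le (thetaA_le_two_pi_sub_thetaA _),
          integral_Ioc_eq_integral_Ioo, ← integral_smul, ← integral_const_mul]
        refine setIntegral_congr_fun measurableSet_Ioo fun θ hθ => ?_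
        rw [integral_Ioo_arcKernel_eq_intervalIntegral ht.le hmono.monotoneOn
          (sin_half_nonneg (arcInterval_subset_Icc hf0 hθ)) (hu θ hθ)]
        simp only [Complex.real_smul, φ]
        push_cast
        field_simp
end
end

section
/- For every t > 0 and every θ ∈ (0, π), ∫_0^{tθ/π} sin(θ/2)/√(sin²(θ/2) − sin²(πs/(2t))) ds = (2t/π) · sin(θ/2) · K(sin(θ/2)), where K(k) = ∫_0^1 dx/√((1 − x²)(1 − k²x²)) is the complete elliptic integral of the first kind. Consequently, for the sampling function |α(s)| = sin(πs/t), the density of the limiting zero distribution of the associated orthogonal polynomials on the unit circle at e^{iθ} equals (sin(θ/2)/π²) · K(sin(θ/2)). -/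
open Filter MeasureTheory
open Set

noncomputable section

/-- The complete elliptic integral of the first kind. -/
def ellK (k : ℝ) : ℝ :=
  ∫ x in (0 : ℝ)..1, 1 / Real.sqrt ((1 - x ^ 2) * (1 - k ^ 2 * x ^ 2))

/-- For the sampling function `sin(πs/(2t))`, the density integral evaluates to the
complete elliptic integral of the first kind; consequently, the density of the limiting
zero distribution for `|α(s)| = sin(πs/t)` at `e^{iθ}` equals
`(sin(θ/2)/π²) K(sin(θ/2))`. -/
theorem stmt19 (t : ℝ) (ht : 0 < t) (θ : ℝ) (hθ : θ ∈ Set.Ioo (0 : ℝ) Real.pi) :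
    (∫ s in (0 : ℝ)..(t * θ / Real.pi),
        Real.sin (θ / 2) /
          Real.sqrt (Real.sin (θ / 2) ^ 2 - Real.sin (Real.pi * s / (2 * t)) ^ 2))
      = (2 * t / Real.pi) * Real.sin (θ / 2) * ellK (Real.sin (θ / 2)) ∧
    (1 / (2 * Real.pi * t)) *
        (∫ s in (0 : ℝ)..(t * θ / Real.pi),
          Real.sin (θ / 2) /
            Real.sqrt (Real.sin (θ / 2) ^ 2 - Real.sin (Real.pi * s / (2 * t)) ^ 2))
      = Real.sin (θ / 2) / Real.pi ^ 2 * ellK (Real.sin (θ / 2)) := by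
  obtain ⟨hθ0, hθπ⟩ := hθ
  have hπ : (0 : ℝ) < Real.pi := Real.pi_pos
  set k := Real.sin (θ / 2) with hk
  have hθ2 : 0 < θ / 2 := by linarith
  have hθ2' : θ / 2 < Real.pi / 2 := by linarith
  have hk0 : 0 < k := Real.sin_pos_of_pos_of_lt_pi hθ2 (by linarith)
  have hk1 : k < 1 := by
    calc k < Real.sin (Real.pi / 2) := by
            apply Real.strictMonoOn_sin ⟨by linarith, by linarith⟩
              ⟨by linarith, le_refl _⟩ hθ2'
      _ = 1 := Real.sin_pi_div_two
  set b := t * θ / Real.pi with hb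
  have hb0 : 0 < b := by positivity
  set c := Real.pi / (2 * t) with hc
  have hc0 : 0 < c := by positivity
  have hcb : c * b = θ / 2 := by
    rw [hb, hc, div_mul_div_comm, div_eq_iff (by positivity)]; ring
  set φ : ℝ → ℝ := fun s => Real.sin (Real.pi * s / (2 * t)) with hφ
  have hφeq : ∀ s, φ s = Real.sin (c * s) := by
    intro s; simp only [hφ, hc]; congr 1; ring
  have hφd : ∀ s, HasDerivAt φ (c * Real.cos (c * s)) s := by
    intro s
    have h1 : HasDerivAt (fun s : ℝ => c * s) c s := by
      simpa using (hasDerivAt_id s).const_mul c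
    have h3 : HasDerivAt (fun s => Real.sin (c * s)) (Real.cos (c * s) * c) s :=
      (Real.hasDerivAt_sin (c * s)).comp s h1
    have h2 : (fun s => Real.sin (c * s)) = φ := by funext s; rw [hφeq]
    rw [h2] at h3
    rw [mul_comm]
    exact h3
  have hmem : ∀ s ∈ Ioo (0:ℝ) b, c * s ∈ Ioo 0 (θ / 2) := by
    intro s hs
    refine ⟨mul_pos hc0 hs.1, ?_⟩
    calc c * s < c * b := by nlinarith [hs.2]
      _ = θ / 2 := hcb
  have hmono : StrictMonoOn φ (Icc 0 b) := by
    intro x hx y hy hxy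
    rw [hφeq, hφeq]
    apply Real.strictMonoOn_sin ⟨?_, ?_⟩ ⟨?_, ?_⟩ (by nlinarith)
    · nlinarith [hx.1]
    · nlinarith [hx.2]
    · nlinarith [hy.1]
    · nlinarith [hy.2]
  have hφ0 : φ 0 = 0 := by rw [hφeq]; simp
  have hφb : φ b = k := by rw [hφeq, hcb]
  have hφcont : ContinuousOn φ (Icc 0 b) := by
    apply Continuous.continuousOn
    simp only [hφ]
    fun_prop
  -- image of Ioo 0 b under φ
  have himg : φ '' Ioo 0 b = Ioo 0 k := by
    apply Subset.antisymm
    · have := hmono.image_Ioo_subset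
      rwa [hφ0, hφb] at this
    · have := intermediate_value_Ioo hb0.le hφcont
      rwa [hφ0, hφb] at this
  -- intermediate integrand
  set g : ℝ → ℝ := fun y =>
    (2 * t / Real.pi) * (k / (Real.sqrt (k ^ 2 - y ^ 2) * Real.sqrt (1 - y ^ 2))) with hg
  -- first substitution
  have sub1 : ∫ y in Ioo (0:ℝ) k, g y
      = ∫ s in Ioo (0:ℝ) b, k / Real.sqrt (k ^ 2 - φ s ^ 2) := by
    rw [← himg,
      integral_image_eq_integral_abs_deriv_smul measurableSet_Ioo
        (fun s _ => (hφd s).hasDerivWithinAt)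
        (hmono.injOn.mono Ioo_subset_Icc_self) g]
    apply setIntegral_congr_fun measurableSet_Ioo
    intro s hs
    obtain ⟨hu0, hu2⟩ := hmem s hs
    have hcos : 0 < Real.cos (c * s) :=
      Real.cos_pos_of_mem_Ioo ⟨by linarith, by linarith⟩
    have h1 : Real.sqrt (1 - φ s ^ 2) = Real.cos (c * s) := by
      rw [hφeq, ← Real.cos_sq' (c * s), Real.sqrt_sq hcos.le]
    simp only [hg, smul_eq_mul, abs_of_pos (by positivity : 0 < c * Real.cos (c * s)), h1]
    have hc2 : c * (2 * t / Real.pi) = 1 := by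
      rw [hc]; field_simp
    set u := c * s with hu
    set A := Real.sqrt (k ^ 2 - φ s ^ 2) with hA
    calc c * Real.cos u * (2 * t / Real.pi * (k / (A * Real.cos u)))
        = c * (2 * t / Real.pi) * (k * Real.cos u / (A * Real.cos u)) := by ring
      _ = k * Real.cos u / (A * Real.cos u) := by rw [hc2, one_mul]
      _ = k / A := mul_div_mul_right _ _ hcos.ne'
  -- second substitution : y = k * x
  have himg2 : (fun x => k * x) '' Ioo (0:ℝ) 1 = Ioo 0 k := by
    rw [Set.image_mul_left_Ioo hk0, mul_zero, mul_one]
  have sub2 : ∫ y in Ioo (0:ℝ) k, g y = ∫ x in Ioo (0:ℝ) 1, k * g (k * x) := by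
    rw [← himg2,
      integral_image_eq_integral_abs_deriv_smul (f' := fun _ => k) measurableSet_Ioo
        (fun x _ => by simpa using ((hasDerivAt_id x).const_mul k).hasDerivWithinAt)
        (fun x _ y _ h => mul_left_cancel₀ hk0.ne' h) g]
    refine setIntegral_congr_fun measurableSet_Ioo fun x _ => ?_
    rw [smul_eq_mul, abs_of_pos hk0]
  -- identify k * g (k x) with the elliptic integrand
  have hpt : ∀ x ∈ Ioo (0:ℝ) 1,
      k * g (k * x)
        = (2 * t / Real.pi) * k * (1 / Real.sqrt ((1 - x ^ 2) * (1 - k ^ 2 * x ^ 2))) := by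
    intro x hx
    obtain ⟨hx0, hx1⟩ := hx
    have h1 : k ^ 2 - (k * x) ^ 2 = k ^ 2 * (1 - x ^ 2) := by ring
    have h2 : (1:ℝ) - (k * x) ^ 2 = 1 - k ^ 2 * x ^ 2 := by ring
    have hx2 : (0:ℝ) < 1 - x ^ 2 := by nlinarith
    have hkx2 : (0:ℝ) < 1 - k ^ 2 * x ^ 2 := by nlinarith
    simp only [hg, h1, h2]
    rw [Real.sqrt_mul (by positivity), Real.sqrt_sq hk0.le,
      Real.sqrt_mul hx2.le (1 - k ^ 2 * x ^ 2)]
    field_simp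
  -- chain everything
  have key : (∫ s in (0:ℝ)..b, k / Real.sqrt (k ^ 2 - φ s ^ 2))
      = (2 * t / Real.pi) * k * ellK k := by
    rw [intervalIntegral.integral_of_le hb0.le, integral_Ioc_eq_integral_Ioo, ← sub1, sub2,
      setIntegral_congr_fun measurableSet_Ioo hpt, MeasureTheory.integral_const_mul]
    congr 1
    rw [ellK, intervalIntegral.integral_of_le (by norm_num : (0:ℝ) ≤ 1),
      integral_Ioc_eq_integral_Ioo]
  constructor
  · exact key
  · rw [key]
    have hπne : Real.pi ≠ 0 := hπ.ne'
    field_simp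

end
end
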